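/- For the maximally entangled two-qubit state |φ⟩ = (|00⟩ + |11⟩)/√2 and any rank-one product projector C = |a⟩⟨a| ⊗ |b⟩⟨b|, if ⟨φ|C|φ⟩ ≠ 0 then the Lüders conditional probabilities in |φ⟩ satisfy the screening-off condition P(A,B|C) = P(A|C)P(B|C) for all local observables A = A₀⊗I, B = I⊗B₀, even though |φ⟩ itself exhibits correlations violating the CHSH inequality. -/

import Mathlib

/-!
A rank-one product projector `C = |a⟩⟨a| ⊗ |b⟩⟨b|` compresses every product operator to a
scalar multiple of itself: `C (A₀ ⊗ B₀) C = ⟨a|A₀|a⟩ ⟨b|B₀|b⟩ C`. Hence every Lüders conditional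
probability given `C` is such a scalar, and for `A = A₀ ⊗ 1`, `B = 1 ⊗ B₀` they factorize,
whatever the state.

The CHSH violation is Tsirelson's: with `A = Z, X` and `B = (Z ± X)/√2` the CHSH operator is
`√2 (Z ⊗ Z + X ⊗ X)`, and the Bell state is a `+1` eigenvector of both `Z ⊗ Z` and `X ⊗ X`.
-/

open Matrix Kronecker

def proj {n : Type*} [Fintype n] (v : n → ℂ) : Matrix n n ℂ :=
  Matrix.of fun i j => v i * star (v j)

section Luders

variable {ι m n : Type*} [Fintype ι] [Fintype m] [Fintype n]

lemma proj_mul_mul_proj (v : n → ℂ) (M : Matrix n n ℂ) :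
    proj v * M * proj v = (star v ⬝ᵥ M *ᵥ v) • proj v := by
  ext i j
  simp only [proj, mul_apply, of_apply, Matrix.smul_apply, smul_eq_mul, dotProduct, mulVec,
    Pi.star_apply, Finset.sum_mul, Finset.mul_sum]
  rw [Finset.sum_comm]
  refine Finset.sum_congr rfl fun k _ => Finset.sum_congr rfl fun l _ => ?_
  ring

lemma kronecker_proj_mul_mul_kronecker_proj (a : m → ℂ) (b : n → ℂ)
    (X : Matrix m m ℂ) (Y : Matrix n n ℂ) :
    (proj a ⊗ₖ proj b) * (X ⊗ₖ Y) * (proj a ⊗ₖ proj b) =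
      ((star a ⬝ᵥ X *ᵥ a) * (star b ⬝ᵥ Y *ᵥ b)) • (proj a ⊗ₖ proj b) := by
  rw [← mul_kronecker_mul, ← mul_kronecker_mul, proj_mul_mul_proj, proj_mul_mul_proj,
    smul_kronecker, kronecker_smul, smul_smul]

/-- The Lüders conditional probability `P(X | C)` in the state `φ`. -/
noncomputable def luders (φ : ι → ℂ) (C X : Matrix ι ι ℂ) : ℂ :=
  (star φ ⬝ᵥ (C * X * C) *ᵥ φ) / (star φ ⬝ᵥ C *ᵥ φ)

lemma luders_eq_of_mul_mul_eq_smul (φ : ι → ℂ) {C X : Matrix ι ι ℂ} {c : ℂ}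
    (hX : C * X * C = c • C) (hC : star φ ⬝ᵥ C *ᵥ φ ≠ 0) : luders φ C X = c := by
  rw [luders, hX, smul_mulVec, dotProduct_smul, smul_eq_mul]
  exact mul_div_cancel_right₀ c hC

variable [DecidableEq m] [DecidableEq n]

theorem luders_mul_eq_mul_of_kronecker_proj (φ : m × n → ℂ) {a : m → ℂ} {b : n → ℂ}
    (ha : star a ⬝ᵥ a = 1) (hb : star b ⬝ᵥ b = 1)
    (hne : star φ ⬝ᵥ (proj a ⊗ₖ proj b) *ᵥ φ ≠ 0) (A₀ : Matrix m m ℂ) (B₀ : Matrix n n ℂ) :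
    luders φ (proj a ⊗ₖ proj b) (A₀ ⊗ₖ (1 : Matrix n n ℂ) * (1 : Matrix m m ℂ) ⊗ₖ B₀) =
      luders φ (proj a ⊗ₖ proj b) (A₀ ⊗ₖ (1 : Matrix n n ℂ)) *
        luders φ (proj a ⊗ₖ proj b) ((1 : Matrix m m ℂ) ⊗ₖ B₀) := by
  have hA := kronecker_proj_mul_mul_kronecker_proj a b A₀ 1
  have hB := kronecker_proj_mul_mul_kronecker_proj a b 1 B₀
  rw [one_mulVec, hb, mul_one] at hA
  rw [one_mulVec, ha, one_mul] at hB
  rw [← mul_kronecker_mul, Matrix.mul_one, Matrix.one_mul,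
    luders_eq_of_mul_mul_eq_smul φ (kronecker_proj_mul_mul_kronecker_proj a b A₀ B₀) hne,
    luders_eq_of_mul_mul_eq_smul φ hA hne, luders_eq_of_mul_mul_eq_smul φ hB hne]

end Luders

section Tsirelson

variable {R : Type*} [Ring R]

lemma add_mul_self_eq_two_of_anticommute {P Q : R} (hP : P * P = 1) (hQ : Q * Q = 1)
    (hPQ : P * Q + Q * P = 0) : (P + Q) * (P + Q) = 2 := by
  calc (P + Q) * (P + Q) = P * P + Q * Q + (P * Q + Q * P) := by noncomm_ring
    _ = 2 := by rw [hP, hQ, hPQ, add_zero, one_add_one_eq_two]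

lemma inv_sqrt_two_smul_add_mul_self [Algebra ℝ R] {P Q : R} (hP : P * P = 1) (hQ : Q * Q = 1)
    (hPQ : P * Q + Q * P = 0) :
    ((√2)⁻¹ • (P + Q)) * ((√2)⁻¹ • (P + Q)) = 1 := by
  rw [smul_mul_smul_comm, add_mul_self_eq_two_of_anticommute hP hQ hPQ,
    TsirelsonInequality.sqrt_two_inv_mul_self,
    show (2 : R) = (2 : ℝ) • 1 by rw [two_smul, one_add_one_eq_two],
    smul_smul, inv_mul_cancel₀ two_ne_zero, one_smul]

end Tsirelson

lemma inv_sqrt_two_mul_two : (√2)⁻¹ * 2 = √2 := by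
  rw [inv_mul_eq_div, Real.div_sqrt]

section Pauli

def pauliX : Matrix (Fin 2) (Fin 2) ℂ := !![0, 1; 1, 0]
def pauliZ : Matrix (Fin 2) (Fin 2) ℂ := !![1, 0; 0, -1]

lemma pauliX_isHermitian : pauliX.IsHermitian := by
  ext i j; fin_cases i <;> fin_cases j <;> simp [pauliX]

lemma pauliZ_isHermitian : pauliZ.IsHermitian := by
  ext i j; fin_cases i <;> fin_cases j <;> simp [pauliZ]

lemma pauliX_mul_self : pauliX * pauliX = 1 := by
  ext i j; fin_cases i <;> fin_cases j <;> simp [pauliX]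

lemma pauliZ_mul_self : pauliZ * pauliZ = 1 := by
  ext i j; fin_cases i <;> fin_cases j <;> simp [pauliZ]

lemma pauliZ_mul_pauliX_add_pauliX_mul_pauliZ : pauliZ * pauliX + pauliX * pauliZ = 0 := by
  ext i j; fin_cases i <;> fin_cases j <;> simp [pauliX, pauliZ]

noncomputable def tsirelsonB₀ : Matrix (Fin 2) (Fin 2) ℂ := (√2)⁻¹ • (pauliZ + pauliX)
noncomputable def tsirelsonB₁ : Matrix (Fin 2) (Fin 2) ℂ := (√2)⁻¹ • (pauliZ - pauliX)

lemma tsirelsonB₀_isHermitian : tsirelsonB₀.IsHermitian :=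
  (pauliZ_isHermitian.add pauliX_isHermitian).smul (IsSelfAdjoint.all _)

lemma tsirelsonB₁_isHermitian : tsirelsonB₁.IsHermitian :=
  (pauliZ_isHermitian.sub pauliX_isHermitian).smul (IsSelfAdjoint.all _)

lemma tsirelsonB₀_mul_self : tsirelsonB₀ * tsirelsonB₀ = 1 :=
  inv_sqrt_two_smul_add_mul_self pauliZ_mul_self pauliX_mul_self
    pauliZ_mul_pauliX_add_pauliX_mul_pauliZ

lemma tsirelsonB₁_mul_self : tsirelsonB₁ * tsirelsonB₁ = 1 := by
  rw [tsirelsonB₁, sub_eq_add_neg]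
  refine inv_sqrt_two_smul_add_mul_self pauliZ_mul_self ?_ ?_
  · rw [neg_mul_neg, pauliX_mul_self]
  · rw [mul_neg, neg_mul, ← neg_add, pauliZ_mul_pauliX_add_pauliX_mul_pauliZ, neg_zero]

lemma tsirelsonB₀_add_tsirelsonB₁ : tsirelsonB₀ + tsirelsonB₁ = √2 • pauliZ := by
  unfold tsirelsonB₀ tsirelsonB₁
  linear_combination (norm := module) inv_sqrt_two_mul_two • pauliZ

lemma tsirelsonB₀_sub_tsirelsonB₁ : tsirelsonB₀ - tsirelsonB₁ = √2 • pauliX := by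
  unfold tsirelsonB₀ tsirelsonB₁
  linear_combination (norm := module) inv_sqrt_two_mul_two • pauliX

end Pauli

lemma chsh_eq_kronecker_add_kronecker {m n α : Type*} [CommRing α]
    (A₀ A₁ : Matrix m m α) (B₀ B₁ : Matrix n n α) :
    A₀ ⊗ₖ B₀ + A₀ ⊗ₖ B₁ + A₁ ⊗ₖ B₀ - A₁ ⊗ₖ B₁ = A₀ ⊗ₖ (B₀ + B₁) + A₁ ⊗ₖ (B₀ - B₁) := by
  ext ⟨i, j⟩ ⟨k, l⟩
  simp only [Matrix.add_apply, Matrix.sub_apply, kroneckerMap_apply]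
  ring

noncomputable def bell : Fin 2 × Fin 2 → ℂ :=
  fun p => if p.1 = p.2 then ((Real.sqrt 2 : ℝ)⁻¹ : ℂ) else 0

lemma star_bell_dotProduct_bell : star bell ⬝ᵥ bell = 1 := by
  simp only [dotProduct, Pi.star_apply, bell, RCLike.star_def, mul_ite, mul_zero,
    Fintype.sum_prod_type, Finset.sum_ite_eq, Finset.mem_univ, ↓reduceIte, map_inv₀,
    Complex.conj_ofReal, Finset.sum_const, Finset.card_univ, Fintype.card_fin, nsmul_eq_mul,
    Nat.cast_ofNat]
  rw [← mul_inv, ← Complex.ofReal_mul, Real.mul_self_sqrt zero_le_two]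
  norm_num

lemma pauliZ_kronecker_pauliZ_mulVec_bell : (pauliZ ⊗ₖ pauliZ) *ᵥ bell = bell := by
  ext ⟨i, j⟩; fin_cases i <;> fin_cases j <;>
    simp [pauliZ, bell, mulVec, dotProduct, Fintype.sum_prod_type]

lemma pauliX_kronecker_pauliX_mulVec_bell : (pauliX ⊗ₖ pauliX) *ᵥ bell = bell := by
  ext ⟨i, j⟩; fin_cases i <;> fin_cases j <;>
    simp [pauliX, bell, mulVec, dotProduct, Fintype.sum_prod_type]

lemma star_bell_dotProduct_chsh_tsirelson_mulVec_bell :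
    star bell ⬝ᵥ ((pauliZ ⊗ₖ tsirelsonB₀ + pauliZ ⊗ₖ tsirelsonB₁ + pauliX ⊗ₖ tsirelsonB₀
      - pauliX ⊗ₖ tsirelsonB₁) *ᵥ bell) = ((2 * √2 : ℝ) : ℂ) := by
  rw [chsh_eq_kronecker_add_kronecker, tsirelsonB₀_add_tsirelsonB₁, tsirelsonB₀_sub_tsirelsonB₁,
    kronecker_smul, kronecker_smul, ← smul_add, smul_mulVec, add_mulVec,
    pauliZ_kronecker_pauliZ_mulVec_bell, pauliX_kronecker_pauliX_mulVec_bell, dotProduct_smul,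
    dotProduct_add, star_bell_dotProduct_bell, Complex.real_smul]
  push_cast
  ring

/-- For the Bell state |φ⟩ = (|00⟩+|11⟩)/√2 and any rank-one
product projector C = |a⟩⟨a| ⊗ |b⟩⟨b| with ⟨φ|C|φ⟩ ≠ 0, the Lüders conditional
probabilities in |φ⟩ screen off: P(A,B|C) = P(A|C)·P(B|C) for all local
observables A = A₀⊗I, B = I⊗B₀ — even though |φ⟩ exhibits CHSH-violating
correlations. -/
theorem stmt12
    (φ : Fin 2 × Fin 2 → ℂ)
    (hφ : φ = fun p => if p.1 = p.2 then ((Real.sqrt 2 : ℝ)⁻¹ : ℂ) else 0)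
    (a b : Fin 2 → ℂ)
    (ha : ∑ i, star (a i) * a i = 1) (hb : ∑ j, star (b j) * b j = 1)
    (C : Matrix (Fin 2 × Fin 2) (Fin 2 × Fin 2) ℂ)
    (hC : C = proj a ⊗ₖ proj b)
    (hne : star φ ⬝ᵥ C.mulVec φ ≠ 0) :
    (∀ (A₀ B₀ : Matrix (Fin 2) (Fin 2) ℂ)
        (A B : Matrix (Fin 2 × Fin 2) (Fin 2 × Fin 2) ℂ),
        A = A₀ ⊗ₖ (1 : Matrix (Fin 2) (Fin 2) ℂ) →
        B = (1 : Matrix (Fin 2) (Fin 2) ℂ) ⊗ₖ B₀ →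
        (star φ ⬝ᵥ (C * A * B * C).mulVec φ) / (star φ ⬝ᵥ C.mulVec φ) =
          ((star φ ⬝ᵥ (C * A * C).mulVec φ) / (star φ ⬝ᵥ C.mulVec φ)) *
            ((star φ ⬝ᵥ (C * B * C).mulVec φ) / (star φ ⬝ᵥ C.mulVec φ))) ∧
    (∃ A₀ A₁ B₀ B₁ : Matrix (Fin 2) (Fin 2) ℂ,
        A₀.IsHermitian ∧ A₁.IsHermitian ∧ B₀.IsHermitian ∧ B₁.IsHermitian ∧
        A₀ * A₀ = 1 ∧ A₁ * A₁ = 1 ∧ B₀ * B₀ = 1 ∧ B₁ * B₁ = 1 ∧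
        ‖star φ ⬝ᵥ
            ((A₀ ⊗ₖ B₀ + A₀ ⊗ₖ B₁ + A₁ ⊗ₖ B₀ - A₁ ⊗ₖ B₁).mulVec φ)‖ =
          2 * Real.sqrt 2 ∧ (2 : ℝ) * Real.sqrt 2 > 2) := by
  obtain rfl : φ = bell := hφ
  subst hC
  refine ⟨fun A₀ B₀ A B hA hB => ?_, pauliZ, pauliX, tsirelsonB₀, tsirelsonB₁,
    pauliZ_isHermitian, pauliX_isHermitian, tsirelsonB₀_isHermitian, tsirelsonB₁_isHermitian,
    pauliZ_mul_self, pauliX_mul_self, tsirelsonB₀_mul_self, tsirelsonB₁_mul_self, ?_, ?_⟩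
  · subst hA hB
    rw [Matrix.mul_assoc (proj a ⊗ₖ proj b) (A₀ ⊗ₖ 1)]
    exact luders_mul_eq_mul_of_kronecker_proj bell ha hb hne A₀ B₀
  · rw [star_bell_dotProduct_chsh_tsirelson_mulVec_bell, Complex.norm_real,
      Real.norm_of_nonneg (by positivity)]
  · linarith [Real.one_lt_sqrt_two]
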